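/- Fix an integer h ≥ 1 and let T_{2,h} be the perfect binary tree of height h with any assignment of nonzero real edge weights. If h is odd, then g(T_{2,h}; n) ≲ n^((2/3)(2^(h+1) − 1)); if h is even, then g(T_{2,h}; n) ≲ n^(1 + (4/3)(2^h − 1)). -/

import Mathlib

open scoped InnerProductSpace

noncomputable section

/-- Points in the plane. -/
abbrev Pt2 : Type := EuclideanSpace ℝ (Fin 2)

/-- The vertex set of the perfect binary rooted tree `T_{2,h}` of height `h`: a vertex is
a list of child-selectors of length at most `h` (the root is the empty list, and the
leaves are the lists of length exactly `h`), so there are `2^(h+1) − 1` vertices. -/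
def TreeVert (c h : ℕ) : Type := {l : List (Fin c) // l.length ≤ h}

/-- Adjacency in the perfect `c`-ary tree `T_{c,h}`: a vertex is adjacent precisely to its
parent and to its children. -/
def treeAdj (c h : ℕ) (u v : TreeVert c h) : Prop :=
  (∃ i : Fin c, u.1 = i :: v.1) ∨ (∃ i : Fin c, v.1 = i :: u.1)

/-- The set of dot product `T_{c,h}`-configurations in a point set `E`, for an
edge-weight function `w`: injective maps `φ` from the vertices of `T_{c,h}` into `E`
such that the dot product of the images of any two adjacent vertices equals the weight of
the corresponding edge. -/
def dpTreeConfigs (c h : ℕ) (w : TreeVert c h → TreeVert c h → ℝ) (E : Finset Pt2) :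
    Set (TreeVert c h → Pt2) :=
  {φ | (∀ v, φ v ∈ E) ∧ Function.Injective φ ∧
    ∀ u v, treeAdj c h u v → ⟪φ u, φ v⟫_ℝ = w u v}

/-!
Count the maps of a weighted binary tree into `E` that respect the weights, dropping injectivity,
recursively from the leaves. For a tree `t` let `f(t)` be the number of such maps, and
`Q(t, w) = ∑ₚ s(p)²`, where `s(p)` counts the maps of `t` hanging from `p` by an edge of weight `w`.
Cauchy–Schwarz at the root gives `f(node a b l r)² ≤ Q(l, a) Q(r, b)`. In the plane a point `q` with
`⟪q, p⟫ = w` is determined by the images `r₁, r₂` of its two children, unless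
`r₁ = (a / w) p` and `r₂ = (b / w) p`; together with the incidence bound
`∑ₚ #{q ∈ E | ⟪q, p⟫ = w}² ≤ 2 n²` this gives `Q(node a b l r, w) ≲ (f(l) f(r))² n + n² D²`,
where `D` bounds the number of maps of `l` and `r` with fixed roots. By induction on the height,
`f ≲ n ^ G_j` with `G_{j+2} = 4 G_j + 1 + (j mod 2)`, that is `3 G_h = 2 ^ (h + 2) - 1 - (h mod 2)`.
-/

open Finset Module

theorem Nat.pow_le_pow_right_of_one_le {n a b : ℕ} (ha : 1 ≤ a) (hab : a ≤ b) : n ^ a ≤ n ^ b := by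
  rcases n.eq_zero_or_pos with rfl | hn
  · rw [zero_pow (by omega)]; exact Nat.zero_le _
  · exact Nat.pow_le_pow_right hn hab

theorem Finset.sum_sum_filter_le_of_card_filter_le_one {ι κ : Type*} [DecidableEq κ]
    (L : Finset ι) (X : Finset κ) (A : ι → κ → Prop) [∀ q x, Decidable (A q x)] (F : κ → ℕ)
    (s : κ) (hA : ∀ x ∈ X, x ≠ s → #{q ∈ L | A q x} ≤ 1) :
    ∑ q ∈ L, ∑ x ∈ X with A q x, F x ≤ ∑ x ∈ X, F x + #L * F s := by
  have hterm : ∀ x ∈ X, #{q ∈ L | A q x} * F x ≤ F x + if x = s then #L * F s else 0 := by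
    intro x hx
    split_ifs with hxs
    · subst hxs
      nlinarith [card_filter_le L (A · x)]
    · nlinarith [hA x hx hxs]
  calc ∑ q ∈ L, ∑ x ∈ X with A q x, F x = ∑ x ∈ X, #{q ∈ L | A q x} * F x := by
        simp_rw [sum_filter, card_filter, sum_mul, ite_mul, one_mul, zero_mul]
        exact sum_comm
    _ ≤ ∑ x ∈ X, (F x + if x = s then #L * F s else 0) := sum_le_sum hterm
    _ ≤ ∑ x ∈ X, F x + #L * F s := by
        rw [sum_add_distrib, sum_ite_eq']
        split_ifs <;> simp

section Geometry

variable {V : Type*} [NormedAddCommGroup V] [InnerProductSpace ℝ V] [Fact (finrank ℝ V = 2)]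

theorem eq_smul_of_inner_eq_of_ne {p q q' r : V} {w : ℝ} (hw : w ≠ 0) (hqq' : q ≠ q')
    (hq : ⟪q, p⟫_ℝ = w) (hq' : ⟪q', p⟫_ℝ = w) (hr : ⟪r, q⟫_ℝ = ⟪r, q'⟫_ℝ) :
    r = (⟪r, q⟫_ℝ / w) • p := by
  have hp : p ≠ 0 := by rintro rfl; exact hw (by simpa using hq.symm)
  have hpd : ⟪q - q', p⟫_ℝ = 0 := by rw [inner_sub_left, hq, hq', sub_self]
  have hrd : ⟪q - q', r⟫_ℝ = 0 := by
    rw [inner_sub_left, real_inner_comm, hr, real_inner_comm, sub_self]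
  obtain ⟨μ, rfl⟩ := Submodule.mem_span_singleton.mp <|
    Submodule.mem_span_singleton_of_inner_eq_zero_of_inner_eq_zero (sub_ne_zero.mpr hqq') hp hrd hpd
  rw [real_inner_smul_left, real_inner_comm, hq, mul_div_cancel_right₀ _ hw]

theorem subsingleton_setOf_inner_eq_and_inner_eq {q r : V} {w : ℝ} (hw : w ≠ 0) (hqr : q ≠ r) :
    {p : V | ⟪q, p⟫_ℝ = w ∧ ⟪r, p⟫_ℝ = w}.Subsingleton := by
  rintro p ⟨hqp, hrp⟩ p' ⟨hqp', hrp'⟩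
  by_contra hpp'
  refine hqr (Eq.symm ?_)
  rw [real_inner_comm] at hqp hqp'
  simpa [hrp, div_self hw] using eq_smul_of_inner_eq_of_ne hw hpp' hqp hqp' (hrp.trans hrp'.symm)

end Geometry

inductive WeightedBinTree : ℕ → Type
  | leaf : WeightedBinTree 0
  | node {j : ℕ} (a b : ℝ) (l r : WeightedBinTree j) : WeightedBinTree (j + 1)

namespace WeightedBinTree

def NonzeroWeights : {j : ℕ} → WeightedBinTree j → Prop
  | _, leaf => True
  | _, node a b l r => a ≠ 0 ∧ b ≠ 0 ∧ l.NonzeroWeights ∧ r.NonzeroWeights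

end WeightedBinTree

open WeightedBinTree

section Counting

open scoped Classical

variable {V : Type*} [NormedAddCommGroup V] [InnerProductSpace ℝ V]

def dotLevel (E : Finset V) (p : V) (w : ℝ) : Finset V := {q ∈ E | ⟪q, p⟫_ℝ = w}

/-- The number of maps of `t` into `E`, not necessarily injective, sending the root to `p` and
respecting the edge weights as dot products. -/
def homCount (E : Finset V) : {j : ℕ} → WeightedBinTree j → V → ℕ
  | _, leaf, _ => 1
  | _, node a b l r, p =>
      (∑ q ∈ dotLevel E p a, homCount E l q) * ∑ q ∈ dotLevel E p b, homCount E r q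

def pendantCount (E : Finset V) {j : ℕ} (t : WeightedBinTree j) (w : ℝ) (p : V) : ℕ :=
  ∑ q ∈ dotLevel E p w, homCount E t q

def totalCount (E : Finset V) {j : ℕ} (t : WeightedBinTree j) : ℕ :=
  ∑ p ∈ E, homCount E t p

def pendantEnergy (E : Finset V) {j : ℕ} (t : WeightedBinTree j) (w : ℝ) : ℕ :=
  ∑ p ∈ E, pendantCount E t w p ^ 2

def graft (p : V) (φ₀ φ₁ : List (Fin 2) → V) : List (Fin 2) → V
  | [] => p
  | i :: r => ![φ₀, φ₁] i r

/-- Maps of `t` into `E` rooted at `p`, recorded as functions on paths from the root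
(constant below the leaves). -/
def homSet (E : Finset V) : {j : ℕ} → WeightedBinTree j → V → Finset (List (Fin 2) → V)
  | _, leaf, p => {fun _ => p}
  | _, node a b l r, p =>
      ((dotLevel E p a).biUnion (homSet E l) ×ˢ (dotLevel E p b).biUnion (homSet E r)).image
        fun φ => graft p φ.1 φ.2

variable (E : Finset V) {j : ℕ}

theorem homCount_node (a b : ℝ) (l r : WeightedBinTree j) (p : V) :
    homCount E (node a b l r) p = pendantCount E l a p * pendantCount E r b p := rfl

theorem pendantCount_le_totalCount (t : WeightedBinTree j) (w : ℝ) (p : V) :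
    pendantCount E t w p ≤ totalCount E t :=
  sum_le_sum_of_subset (filter_subset _ _)

theorem totalCount_leaf : totalCount E leaf = #E := by
  simp [totalCount, homCount]

theorem pendantEnergy_leaf (w : ℝ) :
    pendantEnergy E leaf w = ∑ p ∈ E, #(dotLevel E p w) ^ 2 := by
  simp [pendantEnergy, pendantCount, homCount]

theorem totalCount_node_sq_le (a b : ℝ) (l r : WeightedBinTree j) :
    totalCount E (node a b l r) ^ 2 ≤ pendantEnergy E l a * pendantEnergy E r b :=
  sum_mul_sq_le_sq_mul_sq E _ _

theorem homCount_node_eq_sum (a b : ℝ) (l r : WeightedBinTree j) (q : V) :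
    homCount E (node a b l r) q =
      ∑ x ∈ E ×ˢ E with ⟪x.1, q⟫_ℝ = a ∧ ⟪x.2, q⟫_ℝ = b, homCount E l x.1 * homCount E r x.2 := by
  rw [homCount_node, pendantCount, pendantCount, sum_mul_sum, ← sum_product', dotLevel, dotLevel,
    ← filter_product]

theorem card_homSet_le (t : WeightedBinTree j) (p : V) :
    #(homSet E t p) ≤ homCount E t p := by
  induction t generalizing p with
  | leaf => simp [homSet, homCount]
  | node a b l r ihl ihr =>
    rw [homSet, homCount_node]
    refine card_image_le.trans ?_
    rw [card_product]
    exact Nat.mul_le_mul (card_biUnion_le.trans (sum_le_sum fun q _ => ihl q))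
      (card_biUnion_le.trans (sum_le_sum fun q _ => ihr q))

variable [Fact (finrank ℝ V = 2)]

theorem sum_card_dotLevel_sq_le {w : ℝ} (hw : w ≠ 0) :
    ∑ p ∈ E, #(dotLevel E p w) ^ 2 ≤ 2 * #E ^ 2 := by
  set R : V → V × V → Prop := fun p x => ⟪x.1, p⟫_ℝ = w ∧ ⟪x.2, p⟫_ℝ = w
  have hbelow : ∀ x ∈ E.offDiag, #(E.bipartiteBelow R x) ≤ 1 := fun x hx =>
    card_le_one.mpr fun p hp p' hp' =>
      subsingleton_setOf_inner_eq_and_inner_eq hw (mem_offDiag.mp hx).2.2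
        (mem_filter.mp hp).2 (mem_filter.mp hp').2
  calc ∑ p ∈ E, #(dotLevel E p w) ^ 2 = ∑ p ∈ E, #((E ×ˢ E).bipartiteAbove R p) := by
        refine sum_congr rfl fun p _ => ?_
        rw [sq, ← card_product, dotLevel, ← filter_product]
        rfl
    _ = ∑ x ∈ E ×ˢ E, #(E.bipartiteBelow R x) :=
        sum_card_bipartiteAbove_eq_sum_card_bipartiteBelow _
    _ = ∑ x ∈ E.diag, #(E.bipartiteBelow R x) + ∑ x ∈ E.offDiag, #(E.bipartiteBelow R x) := by
        rw [← diag_union_offDiag, sum_union (disjoint_diag_offDiag E)]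
    _ ≤ #E.diag * #E + #E.offDiag * 1 :=
        add_le_add (sum_le_card_nsmul _ _ _ fun x _ => card_filter_le _ _)
          (sum_le_card_nsmul _ _ _ hbelow)
    _ ≤ 2 * #E ^ 2 := by
        rw [diag_card, offDiag_card]
        have := Nat.sub_le (#E * #E) #E
        nlinarith

theorem pendantCount_node_le (a b : ℝ) (l r : WeightedBinTree j) {w : ℝ} (hw : w ≠ 0) (p : V) :
    pendantCount E (node a b l r) w p ≤ totalCount E l * totalCount E r +
      #(dotLevel E p w) * (homCount E l ((a / w) • p) * homCount E r ((b / w) • p)) := by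
  have hunique : ∀ x ∈ E ×ˢ E, x ≠ ((a / w) • p, (b / w) • p) →
      #{q ∈ dotLevel E p w | ⟪x.1, q⟫_ℝ = a ∧ ⟪x.2, q⟫_ℝ = b} ≤ 1 := by
    refine fun x _ hx => card_le_one.mpr fun q hq q' hq' => by_contra fun hqq' => hx ?_
    simp only [dotLevel, mem_filter] at hq hq'
    have h₁ := eq_smul_of_inner_eq_of_ne hw hqq' hq.1.2 hq'.1.2 (hq.2.1.trans hq'.2.1.symm)
    have h₂ := eq_smul_of_inner_eq_of_ne hw hqq' hq.1.2 hq'.1.2 (hq.2.2.trans hq'.2.2.symm)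
    rw [hq.2.1] at h₁
    rw [hq.2.2] at h₂
    exact Prod.ext h₁ h₂
  calc pendantCount E (node a b l r) w p
      = ∑ q ∈ dotLevel E p w, ∑ x ∈ E ×ˢ E with ⟪x.1, q⟫_ℝ = a ∧ ⟪x.2, q⟫_ℝ = b,
          homCount E l x.1 * homCount E r x.2 :=
        sum_congr rfl fun q _ => homCount_node_eq_sum E a b l r q
    _ ≤ ∑ x ∈ E ×ˢ E, homCount E l x.1 * homCount E r x.2 +
          #(dotLevel E p w) * (homCount E l ((a / w) • p) * homCount E r ((b / w) • p)) :=
        sum_sum_filter_le_of_card_filter_le_one _ _ _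
          (fun x => homCount E l x.1 * homCount E r x.2) _ hunique
    _ = _ := by rw [sum_product, totalCount, totalCount, sum_mul_sum]

theorem pendantEnergy_node_le (a b : ℝ) (l r : WeightedBinTree j) {w : ℝ} (hw : w ≠ 0) (D : ℕ)
    (hD : ∀ p : V, homCount E l ((a / w) • p) * homCount E r ((b / w) • p) ≤ D) :
    pendantEnergy E (node a b l r) w ≤
      2 * (totalCount E l * totalCount E r) ^ 2 * #E + 4 * D ^ 2 * #E ^ 2 := by
  set F := totalCount E l * totalCount E r
  have hpoint : ∀ p : V, pendantCount E (node a b l r) w p ^ 2 ≤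
      2 * F ^ 2 + 2 * D ^ 2 * #(dotLevel E p w) ^ 2 := by
    intro p
    have h := (pendantCount_node_le E a b l r hw p).trans
      (add_le_add_right (Nat.mul_le_mul_left _ (hD p)) F)
    calc pendantCount E (node a b l r) w p ^ 2 ≤ (F + #(dotLevel E p w) * D) ^ 2 :=
          Nat.pow_le_pow_left h 2
      _ ≤ 2 * (F ^ 2 + (#(dotLevel E p w) * D) ^ 2) := add_sq_le
      _ = 2 * F ^ 2 + 2 * D ^ 2 * #(dotLevel E p w) ^ 2 := by ring
  calc pendantEnergy E (node a b l r) w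
      ≤ ∑ p ∈ E, (2 * F ^ 2 + 2 * D ^ 2 * #(dotLevel E p w) ^ 2) := sum_le_sum fun p _ => hpoint p
    _ = 2 * F ^ 2 * #E + 2 * D ^ 2 * ∑ p ∈ E, #(dotLevel E p w) ^ 2 := by
        rw [sum_add_distrib, sum_const, smul_eq_mul, mul_sum, mul_comm #E]
    _ ≤ 2 * F ^ 2 * #E + 4 * D ^ 2 * #E ^ 2 := by
        nlinarith [sum_card_dotLevel_sq_le E hw]

end Counting

def treeExp : ℕ → ℕ
  | 0 => 1
  | j + 1 => 2 * treeExp j + j % 2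

def homExp : ℕ → ℕ
  | 0 => 0
  | j + 1 => 2 * treeExp j

theorem treeExp_add_two (j : ℕ) : treeExp (j + 2) = 4 * treeExp j + j % 2 + 1 := by
  simp only [treeExp]
  omega

theorem three_mul_treeExp_add (j : ℕ) : 3 * treeExp j + j % 2 + 1 = 2 ^ (j + 2) := by
  induction j with
  | zero => rfl
  | succ j ih => rw [treeExp, pow_succ]; omega

theorem four_mul_homExp_add_two_le (j : ℕ) : 4 * homExp j + 2 ≤ treeExp (j + 2) := by
  cases j with
  | zero => decide
  | succ j => rw [homExp, treeExp_add_two, treeExp]; omega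

theorem treeExp_of_odd {h : ℕ} (hh : Odd h) :
    (treeExp h : ℝ) = 2 / 3 * (2 ^ (h + 1) - 1) := by
  have := three_mul_treeExp_add h
  rw [Nat.odd_iff.mp hh] at this
  have hr : 3 * (treeExp h : ℝ) + 2 = 2 ^ (h + 1) * 2 := by rw [← pow_succ]; exact_mod_cast this
  linarith

theorem treeExp_of_even {h : ℕ} (hh : Even h) :
    (treeExp h : ℝ) = 1 + 4 / 3 * (2 ^ h - 1) := by
  have := three_mul_treeExp_add h
  rw [Nat.even_iff.mp hh] at this
  have hr : 3 * (treeExp h : ℝ) + 1 = 2 ^ h * 4 := by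
    rw [show (4 : ℝ) = 2 ^ 2 by norm_num, ← pow_add]; exact_mod_cast this
  linarith

section Bounds

variable (V : Type*) [NormedAddCommGroup V] [InnerProductSpace ℝ V]

def CountBounds (j A : ℕ) : Prop :=
  ∀ (E : Finset V) (t : WeightedBinTree j), t.NonzeroWeights →
    (∀ p, homCount E t p ≤ A * #E ^ homExp j) ∧ totalCount E t ≤ A * #E ^ treeExp j ∧
      ∀ w ≠ 0, pendantEnergy E t w ≤ A * #E ^ treeExp (j + 1)

variable {V} [Fact (finrank ℝ V = 2)]

theorem countBounds_zero : CountBounds V 0 2 := by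
  rintro E ⟨⟩ -
  refine ⟨fun p => by simp [homCount, homExp], by simp [totalCount_leaf, treeExp]; omega,
    fun w hw => ?_⟩
  rw [pendantEnergy_leaf]
  exact sum_card_dotLevel_sq_le E hw

theorem CountBounds.succ {j A : ℕ} (hA : CountBounds V j A) :
    CountBounds V (j + 1) (6 * A ^ 4) := by
  intro E t ht
  cases t with | node a b l r =>
  obtain ⟨ha, hb, hl, hr⟩ := ht
  obtain ⟨hlHom, hlTot, hlEn⟩ := hA E l hl
  obtain ⟨hrHom, hrTot, hrEn⟩ := hA E r hr
  set n := #E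
  set T := A * n ^ treeExp j
  set H := A * n ^ homExp j
  have hA4 : A ^ 2 ≤ 6 * A ^ 4 := by
    have := Nat.pow_le_pow_right_of_one_le (n := A) one_le_two (show 2 ≤ 4 by norm_num)
    omega
  refine ⟨fun p => ?_, ?_, fun w hw => ?_⟩
  · calc homCount E (node a b l r) p ≤ totalCount E l * totalCount E r :=
          Nat.mul_le_mul (pendantCount_le_totalCount E l a p) (pendantCount_le_totalCount E r b p)
      _ ≤ T * T := Nat.mul_le_mul hlTot hrTot
      _ = A ^ 2 * n ^ homExp (j + 1) := by rw [homExp]; ring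
      _ ≤ 6 * A ^ 4 * n ^ homExp (j + 1) := Nat.mul_le_mul_right _ hA4
  · have hsq : totalCount E (node a b l r) ^ 2 ≤ (A * n ^ treeExp (j + 1)) ^ 2 :=
      (totalCount_node_sq_le E a b l r).trans
        ((Nat.mul_le_mul (hlEn a ha) (hrEn b hb)).trans_eq (sq _).symm)
    calc totalCount E (node a b l r) ≤ A * n ^ treeExp (j + 1) :=
          (Nat.pow_le_pow_iff_left two_ne_zero).mp hsq
      _ ≤ 6 * A ^ 4 * n ^ treeExp (j + 1) :=
          Nat.mul_le_mul_right _ ((Nat.le_self_pow two_ne_zero A).trans hA4)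
  · calc pendantEnergy E (node a b l r) w
        ≤ 2 * (totalCount E l * totalCount E r) ^ 2 * n + 4 * (H * H) ^ 2 * n ^ 2 :=
          pendantEnergy_node_le E a b l r hw _ fun p => Nat.mul_le_mul (hlHom _) (hrHom _)
      _ ≤ 2 * (T * T) ^ 2 * n + 4 * (H * H) ^ 2 * n ^ 2 := by gcongr
      _ = 2 * A ^ 4 * n ^ (4 * treeExp j + 1) + 4 * A ^ 4 * n ^ (4 * homExp j + 2) := by ring
      _ ≤ 2 * A ^ 4 * n ^ treeExp (j + 2) + 4 * A ^ 4 * n ^ treeExp (j + 2) := by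
          refine Nat.add_le_add (Nat.mul_le_mul_left _ ?_) (Nat.mul_le_mul_left _ ?_)
          · exact Nat.pow_le_pow_right_of_one_le (by omega) (by rw [treeExp_add_two]; omega)
          · exact Nat.pow_le_pow_right_of_one_le (by omega) (four_mul_homExp_add_two_le j)
      _ = 6 * A ^ 4 * n ^ treeExp (j + 1 + 1) := by ring

theorem exists_countBounds (j : ℕ) : ∃ A, 0 < A ∧ CountBounds V j A := by
  induction j with
  | zero => exact ⟨2, two_pos, countBounds_zero⟩
  | succ j ih =>
    obtain ⟨A, hA, hbounds⟩ := ih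
    exact ⟨6 * A ^ 4, by positivity, hbounds.succ⟩

end Bounds

/-- The vertex of `T_{c,h}` reached from the root along the path `r`, stopping at depth `h`.
A vertex of `TreeVert` lists its path from the root in reverse order. -/
def vertexAt {c : ℕ} (h : ℕ) (r : List (Fin c)) : TreeVert c h :=
  ⟨(r.take h).reverse, by simp⟩

theorem vertexAt_surjective (c h : ℕ) : Function.Surjective (vertexAt (c := c) h) :=
  fun v => ⟨v.1.reverse, Subtype.ext (by
    simp [vertexAt, List.take_of_length_le (show v.1.reverse.length ≤ h by simpa using v.2)])⟩

theorem vertexAt_of_length_le {c h : ℕ} {l : List (Fin c)} (hl : l.length ≤ h) :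
    (vertexAt h l).1 = l.reverse := by
  simp [vertexAt, List.take_of_length_le hl]

theorem treeAdj_vertexAt_append {c h : ℕ} {l : List (Fin c)} (hl : l.length < h) (i : Fin c) :
    treeAdj c h (vertexAt h (l ++ [i])) (vertexAt h l) :=
  Or.inl ⟨i, by rw [vertexAt_of_length_le (by simpa using hl), vertexAt_of_length_le hl.le]; simp⟩

def pathTree {h : ℕ} (w : TreeVert 2 h → TreeVert 2 h → ℝ) :
    (j : ℕ) → List (Fin 2) → WeightedBinTree j
  | 0, _ => leaf
  | j + 1, l =>
      node (w (vertexAt h (l ++ [0])) (vertexAt h l)) (w (vertexAt h (l ++ [1])) (vertexAt h l))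
        (pathTree w j (l ++ [0])) (pathTree w j (l ++ [1]))

theorem nonzeroWeights_pathTree {h : ℕ} {w : TreeVert 2 h → TreeVert 2 h → ℝ}
    (hne : ∀ u v, treeAdj 2 h u v → w u v ≠ 0) :
    ∀ (j : ℕ) (l : List (Fin 2)), l.length + j ≤ h → (pathTree w j l).NonzeroWeights
  | 0, _, _ => trivial
  | j + 1, l, hl =>
    have hl' (i : Fin 2) : (l ++ [i]).length + j ≤ h := by simp; omega
    ⟨hne _ _ (treeAdj_vertexAt_append (by omega) 0), hne _ _ (treeAdj_vertexAt_append (by omega) 1),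
      nonzeroWeights_pathTree hne j _ (hl' 0), nonzeroWeights_pathTree hne j _ (hl' 1)⟩

instance : Fact (finrank ℝ Pt2 = 2) := ⟨finrank_euclideanSpace_fin⟩

section Configurations

open scoped Classical

theorem comp_vertexAt_append_mem_homSet {h : ℕ} {w : TreeVert 2 h → TreeVert 2 h → ℝ}
    {E : Finset Pt2} {φ : TreeVert 2 h → Pt2} (hφ : φ ∈ dpTreeConfigs 2 h w E) :
    ∀ (j : ℕ) (l : List (Fin 2)), l.length + j = h →
      (fun r => φ (vertexAt h (l ++ r))) ∈ homSet E (pathTree w j l) (φ (vertexAt h l))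
  | 0, l, hl => by
    rw [pathTree, homSet, mem_singleton]
    funext r
    simp [vertexAt, ← hl]
  | j + 1, l, hl => by
    have hchild (i : Fin 2) : (fun r => φ (vertexAt h (l ++ [i] ++ r))) ∈
        (dotLevel E (φ (vertexAt h l)) (w (vertexAt h (l ++ [i])) (vertexAt h l))).biUnion
          (homSet E (pathTree w j (l ++ [i]))) :=
      mem_biUnion.mpr ⟨_,
        mem_filter.mpr ⟨hφ.1 _, hφ.2.2 _ _ (treeAdj_vertexAt_append (by omega) i)⟩,
        comp_vertexAt_append_mem_homSet hφ j _ (by simp; omega)⟩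
    rw [pathTree, homSet, mem_image]
    refine ⟨(_, _), mem_product.mpr ⟨hchild 0, hchild 1⟩, funext fun r => ?_⟩
    rcases r with _ | ⟨i, r⟩
    · simp [graft]
    · fin_cases i <;> simp [graft]

theorem ncard_dpTreeConfigs_le_totalCount (h : ℕ) (w : TreeVert 2 h → TreeVert 2 h → ℝ)
    (E : Finset Pt2) : (dpTreeConfigs 2 h w E).ncard ≤ totalCount E (pathTree w h []) := by
  have hmaps : Set.MapsTo (fun φ => φ ∘ vertexAt h) (dpTreeConfigs 2 h w E)
      (E.biUnion (homSet E (pathTree w h [])) : Set (List (Fin 2) → Pt2)) := fun φ hφ =>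
    mem_biUnion.mpr ⟨_, hφ.1 _, comp_vertexAt_append_mem_homSet hφ h [] h.zero_add⟩
  calc (dpTreeConfigs 2 h w E).ncard ≤ #(E.biUnion (homSet E (pathTree w h []))) :=
        (Set.ncard_le_ncard_of_injOn _ hmaps
          (vertexAt_surjective 2 h).injective_comp_right.injOn (finite_toSet _)).trans_eq
          (Set.ncard_coe_finset _)
    _ ≤ ∑ p ∈ E, #(homSet E (pathTree w h []) p) := card_biUnion_le
    _ ≤ totalCount E (pathTree w h []) := sum_le_sum fun p _ => card_homSet_le E _ p

end Configurations

theorem exists_ncard_dpTreeConfigs_le (h : ℕ) (w : TreeVert 2 h → TreeVert 2 h → ℝ)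
    (hne : ∀ u v, treeAdj 2 h u v → w u v ≠ 0) :
    ∃ A : ℕ, 0 < A ∧ ∀ E : Finset Pt2, (dpTreeConfigs 2 h w E).ncard ≤ A * #E ^ treeExp h := by
  obtain ⟨A, hA, hbounds⟩ := exists_countBounds (V := Pt2) h
  exact ⟨A, hA, fun E => (ncard_dpTreeConfigs_le_totalCount h w E).trans
    (hbounds E _ (nonzeroWeights_pathTree hne h [] (by simp))).2.1⟩

theorem dotProduct_binaryTree_upper_bounds_general (h : ℕ)
    (w : TreeVert 2 h → TreeVert 2 h → ℝ)
    (hne : ∀ u v, treeAdj 2 h u v → w u v ≠ 0) :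
    (Odd h →
      ∃ C : ℝ, 0 < C ∧ ∃ N : ℕ, ∀ n : ℕ, N < n → ∀ E : Finset Pt2, E.card = n →
        ((dpTreeConfigs 2 h w E).ncard : ℝ) ≤
          C * (n : ℝ) ^ ((2 : ℝ) / 3 * (2 ^ (h + 1) - 1))) ∧
    (Even h →
      ∃ C : ℝ, 0 < C ∧ ∃ N : ℕ, ∀ n : ℕ, N < n → ∀ E : Finset Pt2, E.card = n →
        ((dpTreeConfigs 2 h w E).ncard : ℝ) ≤
          C * (n : ℝ) ^ (1 + (4 : ℝ) / 3 * (2 ^ h - 1))) := by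
  obtain ⟨A, hA, hcount⟩ := exists_ncard_dpTreeConfigs_le h w hne
  have hbound (n : ℕ) (E : Finset Pt2) (hE : #E = n) :
      ((dpTreeConfigs 2 h w E).ncard : ℝ) ≤ A * (n : ℝ) ^ (treeExp h : ℝ) := by
    rw [Real.rpow_natCast, ← hE]
    exact_mod_cast hcount E
  refine ⟨fun hodd => ⟨A, by exact_mod_cast hA, 0, fun n _ E hE => ?_⟩,
    fun heven => ⟨A, by exact_mod_cast hA, 0, fun n _ E hE => ?_⟩⟩
  · rw [← treeExp_of_odd hodd]
    exact hbound n E hE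
  · rw [← treeExp_of_even heven]
    exact hbound n E hE

/-- **dot product configurations on perfect binary trees, in the plane.**
Fix `h ≥ 1` and any assignment of nonzero weights to the edges of the perfect binary
tree `T_{2,h}`.  If `h` is odd then `g(T_{2,h}; n) ≲ n^((2/3)(2^(h+1) − 1))`, and if `h`
is even then `g(T_{2,h}; n) ≲ n^(1 + (4/3)(2^h − 1))`. -/
theorem dotProduct_binaryTree_upper_bounds (h : ℕ) (hh : 1 ≤ h)
    (w : TreeVert 2 h → TreeVert 2 h → ℝ)
    (hsym : ∀ u v, w u v = w v u)
    (hne : ∀ u v, treeAdj 2 h u v → w u v ≠ 0) :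
    (Odd h →
      ∃ C : ℝ, 0 < C ∧ ∃ N : ℕ, ∀ n : ℕ, N < n → ∀ E : Finset Pt2, E.card = n →
        ((dpTreeConfigs 2 h w E).ncard : ℝ) ≤
          C * (n : ℝ) ^ ((2 : ℝ) / 3 * (2 ^ (h + 1) - 1))) ∧
    (Even h →
      ∃ C : ℝ, 0 < C ∧ ∃ N : ℕ, ∀ n : ℕ, N < n → ∀ E : Finset Pt2, E.card = n →
        ((dpTreeConfigs 2 h w E).ncard : ℝ) ≤
          C * (n : ℝ) ^ (1 + (4 : ℝ) / 3 * (2 ^ h - 1))) :=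
  dotProduct_binaryTree_upper_bounds_general h w hne
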